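/- Let n ≥ 1 be a natural number. Then d_I(⊕_{i=0}^{n} χ_{[i, i+1)}, χ_{[0, n+1)}) = ⌈n/2⌉. (This computes the even cohomology interleaving distance over ℚ between ℂPⁿ mapped to BS¹ by a nullhomotopic map, whose even barcode is {[0,1), [1,2), …, [n,n+1)}, and ℂPⁿ mapped to BS¹ by a map representing 1 ∈ H², whose even barcode is {[0,n+1)}.) -/

import Mathlib

open scoped ENNReal

/-- A persistence module: a functor from the poset `(ℝ, ≤)` to `K`-vector spaces,
presented by its structure maps. -/
structure PersistenceModule (K : Type) [Field K] where
  X : ℝ → Type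
  [addCommGroupX : ∀ a, AddCommGroup (X a)]
  [moduleX : ∀ a, Module K (X a)]
  map : ∀ {a b : ℝ}, a ≤ b → (X a →ₗ[K] X b)
  map_refl : ∀ a : ℝ, map (le_refl a) = LinearMap.id
  map_trans : ∀ {a b c : ℝ} (hab : a ≤ b) (hbc : b ≤ c),
      map (hab.trans hbc) = (map hbc).comp (map hab)

attribute [instance] PersistenceModule.addCommGroupX PersistenceModule.moduleX

/-- The pair `(φ, ψ)` is an `ε`-interleaving between the persistence modules `F` and `G`:
both are natural transformations (to the `ε`-shifts) and the two triangle identities hold. -/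
structure IsInterleaving (K : Type) [Field K] (ε : ℝ) (F G : PersistenceModule K)
    (φ : ∀ a : ℝ, F.X a →ₗ[K] G.X (a + ε))
    (ψ : ∀ a : ℝ, G.X a →ₗ[K] F.X (a + ε)) : Prop where
  nonneg : 0 ≤ ε
  φ_nat : ∀ {a b : ℝ} (hab : a ≤ b),
      (φ b).comp (F.map hab) = (G.map (add_le_add_left hab ε)).comp (φ a)
  ψ_nat : ∀ {a b : ℝ} (hab : a ≤ b),
      (ψ b).comp (G.map hab) = (F.map (add_le_add_left hab ε)).comp (ψ a)
  tri₁ : ∀ (a : ℝ) (h : a ≤ a + ε + ε), (ψ (a + ε)).comp (φ a) = F.map h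
  tri₂ : ∀ (a : ℝ) (h : a ≤ a + ε + ε), (φ (a + ε)).comp (ψ a) = G.map h

/-- `F` and `G` are `ε`-interleaved. -/
def Interleaved (K : Type) [Field K] (ε : ℝ) (F G : PersistenceModule K) : Prop :=
  ∃ φ ψ, IsInterleaving K ε F G φ ψ

/-- The interleaving distance `d_I(F, G) ∈ [0, ∞]`: the infimum of the set of `ε ≥ 0` such
that `F` and `G` are `ε`-interleaved (`∞` when this set is empty). -/
noncomputable def interleavingDist (K : Type) [Field K] (F G : PersistenceModule K) : ℝ≥0∞ :=
  sInf {x : ℝ≥0∞ | ∃ ε : ℝ, 0 ≤ ε ∧ Interleaved K ε F G ∧ x = ENNReal.ofReal ε}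

attribute [local instance] Classical.propDecidable

lemma subsingleton_ite_bot (K : Type) [Field K] {J : Set ℝ} {a : ℝ} (ha : a ∉ J) :
    Subsingleton ↥(if a ∈ J then (⊤ : Submodule K K) else ⊥) := by
  rw [if_neg ha]
  infer_instance

/-- The interval module `χ_J` associated with an interval `J ⊆ ℝ`: the vector space `K`
at points of `J` (realized as `⊤ ≤ K`), and `0` elsewhere, with identity/zero structure maps. -/
noncomputable def intervalModule (K : Type) [Field K] (J : Set ℝ) (hJ : J.OrdConnected) :
    PersistenceModule K where
  X a := ↥(if a ∈ J then (⊤ : Submodule K K) else ⊥)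
  map {a b} hab :=
    if h : a ∈ J ∧ b ∈ J then
      Submodule.inclusion (le_of_eq (by rw [if_pos h.1, if_pos h.2]))
    else 0
  map_refl a := by
    by_cases ha : a ∈ J
    · rw [dif_pos ⟨ha, ha⟩]
      rfl
    · rw [dif_neg (fun h => ha h.1)]
      haveI := subsingleton_ite_bot K (J := J) ha
      exact LinearMap.ext fun x => Subsingleton.elim _ _
  map_trans := by
    intro a b c hab hbc
    by_cases hac : a ∈ J ∧ c ∈ J
    · have hb : b ∈ J := hJ.out hac.1 hac.2 ⟨hab, hbc⟩
      rw [dif_pos hac, dif_pos ⟨hb, hac.2⟩, dif_pos ⟨hac.1, hb⟩]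
      rfl
    · rw [dif_neg hac]
      rcases not_and_or.mp hac with ha | hc
      · haveI := subsingleton_ite_bot K (J := J) ha
        exact LinearMap.ext fun x => by
          rw [Subsingleton.elim x 0]
          simp
      · haveI := subsingleton_ite_bot K (J := J) hc
        exact LinearMap.ext fun x => Subsingleton.elim _ _

/-- The interval module `χ_{[a,b)}`. -/
noncomputable def chiIco (K : Type) [Field K] (a b : ℝ) : PersistenceModule K :=
  intervalModule K (Set.Ico a b) Set.ordConnected_Ico

/-- The interval module `χ_{[a,∞)}`. -/
noncomputable def chiIci (K : Type) [Field K] (a : ℝ) : PersistenceModule K :=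
  intervalModule K (Set.Ici a) Set.ordConnected_Ici

/-- The zero persistence module `χ_∅`. -/
noncomputable def zeroPM (K : Type) [Field K] : PersistenceModule K :=
  intervalModule K (∅ : Set ℝ) Set.ordConnected_empty

/-- The pointwise direct sum of a family of persistence modules. -/
noncomputable def dsum (K : Type) [Field K] {ι : Type} (F : ι → PersistenceModule K) :
    PersistenceModule K where
  X a := Π₀ i, (F i).X a
  map {a b} hab := DFinsupp.mapRange.linearMap fun i => (F i).map hab
  map_refl a := by
    have : (fun i => (F i).map (le_refl a))
        = fun i => (LinearMap.id : (F i).X a →ₗ[K] (F i).X a) :=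
      funext fun i => (F i).map_refl a
    rw [this]
    exact DFinsupp.mapRange.linearMap_id
  map_trans {a b c} hab hbc := by
    have : (fun i => (F i).map (hab.trans hbc)) =
        fun i => ((F i).map hbc).comp ((F i).map hab) :=
      funext fun i => (F i).map_trans hab hbc
    rw [this]
    exact DFinsupp.mapRange.linearMap_comp _ _

section Aux

variable {K : Type} [Field K]

/-- The canonical map between fibers of interval modules. -/
noncomputable def hm (K : Type) [Field K] (P Q : Prop) :
    ↥(if P then (⊤ : Submodule K K) else ⊥) →ₗ[K] ↥(if Q then (⊤ : Submodule K K) else ⊥) :=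
  if h : P ∧ Q then Submodule.inclusion (le_of_eq (by rw [if_pos h.1, if_pos h.2])) else 0

lemma fib_zero {P : Prop} (hP : ¬ P) (x : ↥(if P then (⊤ : Submodule K K) else ⊥)) : x = 0 := by
  haveI : Subsingleton ↥(if P then (⊤ : Submodule K K) else ⊥) := by
    rw [if_neg hP]; infer_instance
  exact Subsingleton.elim _ _

lemma hm_val {P Q : Prop} (hP : P) (hQ : Q) (x : ↥(if P then (⊤ : Submodule K K) else ⊥)) :
    ((hm K P Q) x : K) = (x : K) := by
  rw [hm, dif_pos ⟨hP, hQ⟩]; rfl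

lemma hm_of_not {P Q : Prop} (h : ¬ (P ∧ Q)) : hm K P Q = 0 := dif_neg h

lemma hm_comp {P Q R : Prop} (h : P → R → Q) :
    (hm K Q R).comp (hm K P Q) = hm K P R := by
  by_cases hP : P
  · by_cases hR : R
    · have hQ : Q := h hP hR
      refine LinearMap.ext fun x => Subtype.ext ?_
      simp only [LinearMap.comp_apply]
      rw [hm_val hQ hR, hm_val hP hQ, hm_val hP hR]
    · rw [hm_of_not (K := K) (fun hv => hR hv.2), hm_of_not (K := K) (P := P) (Q := R) (fun hv => hR hv.2)]
      by_cases hQ : Q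
      · rw [LinearMap.zero_comp]
      · rw [hm_of_not (K := K) (P := P) (fun hv => hQ hv.2), LinearMap.comp_zero]
  · refine LinearMap.ext fun x => ?_
    rw [fib_zero hP x]
    simp

lemma im_map {J : Set ℝ} {hJ : J.OrdConnected} {a b : ℝ} (hab : a ≤ b) :
    (intervalModule K J hJ).map hab = hm K (a ∈ J) (b ∈ J) := rfl

lemma dsum_map_apply {ι : Type} (F : ι → PersistenceModule K) {a b : ℝ} (hab : a ≤ b)
    (y : Π₀ i, (F i).X a) (j : ι) :
    (show Π₀ i, (F i).X b from (dsum K F).map hab y) j = (F j).map hab (y j) :=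
  DFinsupp.mapRange_apply _ (fun i => map_zero _) y j

end Aux

section Aux2

variable {K : Type} [Field K]

lemma hm_comp_comp {K : Type} [Field K] {P Q R : Prop} {M : Type} [AddCommGroup M] [Module K M]
    (g : M →ₗ[K] ↥(if P then (⊤ : Submodule K K) else ⊥)) (h : P → R → Q) :
    (hm K Q R).comp ((hm K P Q).comp g) = (hm K P R).comp g := by
  rw [← LinearMap.comp_assoc, hm_comp h]

lemma chi_map {c d : ℝ} {a b : ℝ} (hab : a ≤ b) :
    (chiIco K c d).map hab = hm K (a ∈ Set.Ico c d) (b ∈ Set.Ico c d) := rfl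

lemma dsum_map_eq {ι : Type} (F : ι → PersistenceModule K) {a b : ℝ} (hab : a ≤ b) :
    (dsum K F).map hab = DFinsupp.mapRange.linearMap (fun i => (F i).map hab) := rfl

variable {ι : Type} {β₁ β₂ : ι → Type}
  [∀ i, AddCommGroup (β₁ i)] [∀ i, Module K (β₁ i)]
  [∀ i, AddCommGroup (β₂ i)] [∀ i, Module K (β₂ i)]

lemma mapRangeL_apply (f : ∀ i, β₁ i →ₗ[K] β₂ i) (y : Π₀ i, β₁ i) (j : ι) :
    DFinsupp.mapRange.linearMap f y j = f j (y j) :=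
  DFinsupp.mapRange_apply (fun i x => f i x) (fun i => (f i).map_zero) y j

lemma lapply_comp_mapRangeL (f : ∀ i, β₁ i →ₗ[K] β₂ i) (j : ι) :
    (DFinsupp.lapply j).comp (DFinsupp.mapRange.linearMap f) =
      (f j).comp (DFinsupp.lapply j) :=
  LinearMap.ext fun y => mapRangeL_apply f y j

lemma mapRangeL_comp_lsingle [DecidableEq ι] (f : ∀ i, β₁ i →ₗ[K] β₂ i) (j : ι) :
    (DFinsupp.mapRange.linearMap f).comp (DFinsupp.lsingle j) =
      (DFinsupp.lsingle j).comp (f j) :=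
  LinearMap.ext fun x =>
    DFinsupp.mapRange_single (f := fun i x => f i x) (hf := fun i => (f i).map_zero)

lemma mapRangeL_zero (f : ∀ i, β₁ i →ₗ[K] β₂ i) (hf : ∀ i, f i = 0) :
    DFinsupp.mapRange.linearMap f = 0 := by
  refine LinearMap.ext fun y => DFinsupp.ext fun j => ?_
  rw [mapRangeL_apply, hf j]
  rfl

lemma lapply_lsingle_comp [DecidableEq ι] {M : Type} [AddCommGroup M] [Module K M]
    (j : ι) (g : M →ₗ[K] β₁ j) :
    (DFinsupp.lapply j).comp ((DFinsupp.lsingle j).comp g) = g := by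
  rw [← LinearMap.comp_assoc, DFinsupp.lapply_comp_lsingle_same, LinearMap.id_comp]

end Aux2

section Main

variable {K : Type} [Field K]

lemma two_ceil_le (n : ℕ) : 2 * ⌈(n : ℝ) / 2⌉₊ ≤ n + 1 := by
  have h := Nat.ceil_lt_add_one (show (0:ℝ) ≤ (n:ℝ)/2 by positivity)
  have h2 : ((2 * ⌈(n : ℝ) / 2⌉₊ : ℕ) : ℝ) < ((n + 2 : ℕ) : ℝ) := by push_cast; linarith
  have h3 : 2 * ⌈(n : ℝ) / 2⌉₊ < n + 2 := by exact_mod_cast h2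
  omega

lemma le_two_ceil (n : ℕ) : (n : ℝ) ≤ 2 * (⌈(n : ℝ) / 2⌉₊ : ℝ) := by
  have := Nat.le_ceil ((n : ℝ) / 2)
  linarith

lemma upper_interleaved (n : ℕ) (hn : 1 ≤ n) :
    Interleaved K ((⌈(n : ℝ) / 2⌉₊ : ℕ) : ℝ)
      (dsum K fun i : Fin (n + 1) => chiIco K ((i : ℕ) : ℝ) (((i : ℕ) : ℝ) + 1))
      (chiIco K 0 ((n : ℝ) + 1)) := by
  have h2m : 2 * ⌈(n : ℝ) / 2⌉₊ ≤ n + 1 := two_ceil_le n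
  have h2m' : 2 * ((⌈(n : ℝ) / 2⌉₊ : ℕ) : ℝ) ≤ (n : ℝ) + 1 := by exact_mod_cast h2m
  have hnm : (n : ℝ) ≤ 2 * ((⌈(n : ℝ) / 2⌉₊ : ℕ) : ℝ) := le_two_ceil n
  have hm1 : 1 ≤ ⌈(n : ℝ) / 2⌉₊ := Nat.one_le_ceil_iff.mpr (by
    have : (1 : ℝ) ≤ (n : ℝ) := by exact_mod_cast hn
    linarith)
  have hm1' : (1 : ℝ) ≤ ((⌈(n : ℝ) / 2⌉₊ : ℕ) : ℝ) := by exact_mod_cast hm1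
  have hmn : ⌈(n : ℝ) / 2⌉₊ < n + 1 := by omega
  obtain ⟨i₀, hvv⟩ : ∃ i₀ : Fin (n + 1), ((i₀ : ℕ) : ℝ) = ((⌈(n : ℝ) / 2⌉₊ : ℕ) : ℝ) :=
    ⟨⟨⌈(n : ℝ) / 2⌉₊, hmn⟩, rfl⟩
  refine ⟨fun a => (hm K (a ∈ Set.Ico ((i₀ : ℕ) : ℝ) (((i₀ : ℕ) : ℝ) + 1))
            (a + ((⌈(n : ℝ) / 2⌉₊ : ℕ) : ℝ) ∈ Set.Ico (0:ℝ) ((n : ℝ) + 1))).comp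
            (DFinsupp.lapply i₀),
          fun a => (DFinsupp.lsingle i₀).comp
            (hm K (a ∈ Set.Ico (0:ℝ) ((n : ℝ) + 1))
              (a + ((⌈(n : ℝ) / 2⌉₊ : ℕ) : ℝ) ∈ Set.Ico ((i₀ : ℕ) : ℝ) (((i₀ : ℕ) : ℝ) + 1))),
          ?_, ?_, ?_, ?_, ?_⟩
  · positivity
  · intro a b hab
    rw [dsum_map_eq, chi_map (add_le_add_left hab _)]
    erw [LinearMap.comp_assoc]
    erw [lapply_comp_mapRangeL _ i₀, chi_map hab, ← LinearMap.comp_assoc,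
        ← LinearMap.comp_assoc,
        hm_comp (show a ∈ Set.Ico ((i₀:ℕ):ℝ) (((i₀:ℕ):ℝ)+1) →
            b + ((⌈(n : ℝ) / 2⌉₊ : ℕ) : ℝ) ∈ Set.Ico (0:ℝ) ((n:ℝ)+1) →
            b ∈ Set.Ico ((i₀:ℕ):ℝ) (((i₀:ℕ):ℝ)+1) by
          simp only [Set.mem_Ico]
          rintro ⟨h1, h2⟩ ⟨h3, h4⟩
          constructor <;> linarith [hvv]),
        hm_comp_comp _ (show a ∈ Set.Ico ((i₀:ℕ):ℝ) (((i₀:ℕ):ℝ)+1) →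
            b + ((⌈(n : ℝ) / 2⌉₊ : ℕ) : ℝ) ∈ Set.Ico (0:ℝ) ((n:ℝ)+1) →
            a + ((⌈(n : ℝ) / 2⌉₊ : ℕ) : ℝ) ∈ Set.Ico (0:ℝ) ((n:ℝ)+1) by
          simp only [Set.mem_Ico]
          rintro ⟨h1, h2⟩ ⟨h3, h4⟩
          constructor <;> linarith [hvv])]
    rfl
  · intro a b hab
    rw [dsum_map_eq, chi_map hab]
    erw [LinearMap.comp_assoc]
    erw [hm_comp (show a ∈ Set.Ico (0:ℝ) ((n:ℝ)+1) →
            b + ((⌈(n : ℝ) / 2⌉₊ : ℕ) : ℝ) ∈ Set.Ico ((i₀:ℕ):ℝ) (((i₀:ℕ):ℝ)+1) →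
            b ∈ Set.Ico (0:ℝ) ((n:ℝ)+1) by
          simp only [Set.mem_Ico]
          rintro ⟨h1, h2⟩ ⟨h3, h4⟩
          have hn0 : (0:ℝ) ≤ (n:ℝ) := Nat.cast_nonneg n
          constructor <;> linarith [hvv]),
        ← LinearMap.comp_assoc, mapRangeL_comp_lsingle _ i₀,
        chi_map (add_le_add_left hab _), LinearMap.comp_assoc,
        hm_comp (show a ∈ Set.Ico (0:ℝ) ((n:ℝ)+1) →
            b + ((⌈(n : ℝ) / 2⌉₊ : ℕ) : ℝ) ∈ Set.Ico ((i₀:ℕ):ℝ) (((i₀:ℕ):ℝ)+1) →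
            a + ((⌈(n : ℝ) / 2⌉₊ : ℕ) : ℝ) ∈ Set.Ico ((i₀:ℕ):ℝ) (((i₀:ℕ):ℝ)+1) by
          simp only [Set.mem_Ico]
          rintro ⟨h1, h2⟩ ⟨h3, h4⟩
          constructor <;> linarith [hvv])]
  · intro a h
    rw [dsum_map_eq]
    erw [LinearMap.comp_assoc]
    erw [hm_comp_comp _ (show a ∈ Set.Ico ((i₀:ℕ):ℝ) (((i₀:ℕ):ℝ)+1) →
            a + ((⌈(n : ℝ) / 2⌉₊ : ℕ) : ℝ) + ((⌈(n : ℝ) / 2⌉₊ : ℕ) : ℝ)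
              ∈ Set.Ico ((i₀:ℕ):ℝ) (((i₀:ℕ):ℝ)+1) →
            a + ((⌈(n : ℝ) / 2⌉₊ : ℕ) : ℝ) ∈ Set.Ico (0:ℝ) ((n:ℝ)+1) by
          simp only [Set.mem_Ico]
          rintro ⟨h1, h2⟩ ⟨h3, h4⟩
          exact absurd hvv (by intro _; linarith)),
        hm_of_not (show ¬ (a ∈ Set.Ico ((i₀:ℕ):ℝ) (((i₀:ℕ):ℝ)+1) ∧
            a + ((⌈(n : ℝ) / 2⌉₊ : ℕ) : ℝ) + ((⌈(n : ℝ) / 2⌉₊ : ℕ) : ℝ)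
              ∈ Set.Ico ((i₀:ℕ):ℝ) (((i₀:ℕ):ℝ)+1)) by
          simp only [Set.mem_Ico]
          rintro ⟨⟨h1, h2⟩, h3, h4⟩
          linarith [hvv]),
        LinearMap.zero_comp, LinearMap.comp_zero,
        mapRangeL_zero _ (fun j => by
          rw [chi_map h]
          exact hm_of_not (by
            simp only [Set.mem_Ico]
            rintro ⟨⟨h1, h2⟩, h3, h4⟩
            linarith))]
    rfl
  · intro a h
    rw [chi_map h]
    erw [LinearMap.comp_assoc]
    erw [lapply_lsingle_comp i₀,
        hm_comp (show a ∈ Set.Ico (0:ℝ) ((n:ℝ)+1) →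
            a + ((⌈(n : ℝ) / 2⌉₊ : ℕ) : ℝ) + ((⌈(n : ℝ) / 2⌉₊ : ℕ) : ℝ)
              ∈ Set.Ico (0:ℝ) ((n:ℝ)+1) →
            a + ((⌈(n : ℝ) / 2⌉₊ : ℕ) : ℝ) ∈ Set.Ico ((i₀:ℕ):ℝ) (((i₀:ℕ):ℝ)+1) by
          simp only [Set.mem_Ico]
          rintro ⟨h1, h2⟩ ⟨h3, h4⟩
          constructor <;> linarith [hvv])]

end Main

section Lower

variable {K : Type} [Field K]

lemma lower_bound (n : ℕ) (hn : 1 ≤ n) (ε : ℝ) (hε : 0 ≤ ε)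
    (hI : Interleaved K ε
      (dsum K fun i : Fin (n + 1) => chiIco K ((i : ℕ) : ℝ) (((i : ℕ) : ℝ) + 1))
      (chiIco K 0 ((n : ℝ) + 1))) :
    ((⌈(n : ℝ) / 2⌉₊ : ℕ) : ℝ) ≤ ε := by
  by_contra hlt
  push_neg at hlt
  obtain ⟨φ, ψ, h⟩ := hI
  have h2m : 2 * ⌈(n : ℝ) / 2⌉₊ ≤ n + 1 := two_ceil_le n
  have hnm : (n : ℝ) ≤ 2 * ((⌈(n : ℝ) / 2⌉₊ : ℕ) : ℝ) := le_two_ceil n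
  have h2m' : 2 * ((⌈(n : ℝ) / 2⌉₊ : ℕ) : ℝ) ≤ (n : ℝ) + 1 := by exact_mod_cast h2m
  -- floor of ε
  have hfl : ((⌊ε⌋₊ : ℕ) : ℝ) ≤ ε := Nat.floor_le hε
  have hfu : ε < ((⌊ε⌋₊ : ℕ) : ℝ) + 1 := Nat.lt_floor_add_one ε
  have hflm : ⌊ε⌋₊ < ⌈(n : ℝ) / 2⌉₊ := (Nat.floor_lt hε).mpr hlt
  have hflm' : ((⌊ε⌋₊ : ℕ) : ℝ) + 1 ≤ ((⌈(n : ℝ) / 2⌉₊ : ℕ) : ℝ) := by exact_mod_cast hflm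
  have hkey : ((⌊ε⌋₊ : ℕ) : ℝ) + 1 + ε < (n : ℝ) + 1 := by linarith
  have hi0n : ⌊ε⌋₊ < n + 1 := by omega
  set i₀ : Fin (n + 1) := ⟨⌊ε⌋₊, hi0n⟩ with hi₀
  -- the element 1 at time 0 in G
  have h0mem : (0 : ℝ) ∈ Set.Ico (0 : ℝ) ((n : ℝ) + 1) := by
    constructor
    · exact le_refl 0
    · have : (0:ℝ) ≤ (n:ℝ) := Nat.cast_nonneg n
      linarith
  set x : ↥(@ite (Submodule K K) ((0:ℝ) ∈ Set.Ico (0:ℝ) ((n : ℝ) + 1))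
      (Classical.propDecidable _) ⊤ ⊥) :=
    ⟨(1 : K), by rw [if_pos h0mem]; exact Submodule.mem_top⟩ with hx
  set y := ψ 0 (show (chiIco K 0 ((n : ℝ) + 1)).X 0 from x) with hy
  have hab : (0 : ℝ) + ε ≤ ((⌊ε⌋₊ : ℕ) : ℝ) + 1 := by linarith
  have hnat := DFunLike.congr_fun (h.φ_nat hab) y
  rw [LinearMap.comp_apply, LinearMap.comp_apply] at hnat
  -- the F-side map kills y
  have hzero : (dsum K fun i : Fin (n + 1) =>
      chiIco K ((i : ℕ) : ℝ) (((i : ℕ) : ℝ) + 1)).map hab y = 0 := by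
    rw [dsum_map_eq]
    refine DFinsupp.ext fun j => ?_
    by_cases hj : j = i₀
    · subst hj
      refine (mapRangeL_apply (fun i : Fin (n + 1) =>
          (chiIco K ((i:ℕ):ℝ) (((i:ℕ):ℝ) + 1)).map hab)
          (show Π₀ i : Fin (n + 1), (chiIco K ((i:ℕ):ℝ) (((i:ℕ):ℝ) + 1)).X ((0:ℝ) + ε) from y)
          i₀).trans ?_
      refine Eq.trans (fib_zero ?_ _) rfl
      rintro ⟨h1, h2⟩
      have hv : ((i₀ : ℕ) : ℝ) = ((⌊ε⌋₊ : ℕ) : ℝ) := rfl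
      linarith
    · refine (mapRangeL_apply (fun i : Fin (n + 1) =>
          (chiIco K ((i:ℕ):ℝ) (((i:ℕ):ℝ) + 1)).map hab)
          (show Π₀ i : Fin (n + 1), (chiIco K ((i:ℕ):ℝ) (((i:ℕ):ℝ) + 1)).X ((0:ℝ) + ε) from y)
          j).trans ?_
      have hyj : (show Π₀ i : Fin (n + 1),
          (chiIco K ((i:ℕ):ℝ) (((i:ℕ):ℝ) + 1)).X ((0:ℝ) + ε) from y) j = 0 :=
        fib_zero (show ¬ ((0:ℝ) + ε ∈ Set.Ico ((j:ℕ):ℝ) (((j:ℕ):ℝ) + 1)) from ?_) _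
      rw [hyj, map_zero]
      exact rfl
      rintro ⟨h1, h2⟩
      rw [zero_add] at h1 h2
      refine hj (Fin.ext ?_)
      have hje : (j : ℕ) = ⌊ε⌋₊ := by
        symm
        rw [Nat.floor_eq_iff hε]
        exact ⟨h1, by exact_mod_cast h2⟩
      rw [hje, hi₀]
  rw [hzero, map_zero] at hnat
  have h0eps : (0:ℝ) ≤ 0 + ε + ε := by linarith
  have htri : φ ((0:ℝ) + ε) y = (chiIco K 0 ((n : ℝ) + 1)).map h0eps x :=
    DFunLike.congr_fun (h.tri₂ 0 h0eps) x
  erw [htri, ← LinearMap.comp_apply,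
      ← (chiIco K 0 ((n : ℝ) + 1)).map_trans _ (add_le_add_left hab ε)] at hnat
  rw [chi_map] at hnat
  have h1 := hm_val h0mem (show ((⌊ε⌋₊ : ℕ) : ℝ) + 1 + ε ∈ Set.Ico (0:ℝ) ((n : ℝ) + 1) from
      ⟨by linarith, hkey⟩) x
  exact zero_ne_one (α := K)
    ((congrArg (fun z : ↥(@ite (Submodule K K)
        (((⌊ε⌋₊ : ℕ) : ℝ) + 1 + ε ∈ Set.Ico (0:ℝ) ((n : ℝ) + 1))
        (Classical.propDecidable _) ⊤ ⊥) => (z : K)) hnat).trans (h1.trans (rfl : (x : K) = 1)))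

end Lower

/-- `d_I(⊕_{i=0}^{n} χ_{[i,i+1)}, χ_{[0,n+1)}) = ⌈n/2⌉` for `n ≥ 1`
(the even cohomology interleaving distance between `ℂPⁿ` over `BS¹` via a nullhomotopic
map and `ℂPⁿ` over `BS¹` via a map representing `1 ∈ H²`). -/
theorem interleavingDist_CPn_trivial_vs_one {K : Type} [Field K] (n : ℕ) (hn : 1 ≤ n) :
    interleavingDist K (dsum K fun i : Fin (n + 1) => chiIco K ((i : ℕ) : ℝ) (((i : ℕ) : ℝ) + 1))
      (chiIco K 0 ((n : ℝ) + 1)) = (⌈(n : ℝ) / 2⌉₊ : ℝ≥0∞) := by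
  apply le_antisymm
  · refine sInf_le ⟨((⌈(n : ℝ) / 2⌉₊ : ℕ) : ℝ), Nat.cast_nonneg _, upper_interleaved n hn, ?_⟩
    rw [ENNReal.ofReal_natCast]
  · refine le_sInf fun b hb => ?_
    obtain ⟨ε, hε, hI, rfl⟩ := hb
    rw [← ENNReal.ofReal_natCast]
    exact ENNReal.ofReal_le_ofReal (lower_bound n hn ε hε hI)
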